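/- arXiv:1907.11153 — 4 statements merged into one kernel-verified Lean document; each statement's English description precedes it below -/
import Mathlib

section
/- For every N ≥ 1, every choice of Jacobi coefficients and every control f, the solution of the finite system admits the representation v^f_{n,t} = Σ_{k=1}^N c^k_t φ_n(λ_k) for all 1 ≤ n ≤ N and t ≥ 0, where c^k_t = ρ_k^{-1} Σ_{s=0}^{t} 𝒯_s(λ_k) f_{t-s}. -/
open scoped BigOperators

/-- Chebyshev polynomials of the second kind (paper normalization):
`𝒯 0 = 0`, `𝒯 1 = 1`, `𝒯 (t+2) = λ · 𝒯 (t+1) − 𝒯 t`. -/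
def chebU (x : ℝ) : ℕ → ℝ
  | 0 => 0
  | 1 => 1
  | t + 2 => x * chebU x (t + 1) - chebU x t

/-- The solution `v^f` of the finite dynamical system of size `N`:
`v_{n,t+1} + v_{n,t-1} - a_n v_{n+1,t} - a_{n-1} v_{n-1,t} - b_n v_{n,t} = 0` for `1 ≤ n ≤ N`,
`v_{n,-1} = v_{n,0} = 0`, `v_{0,t} = f_t`, `v_{N+1,t} = 0`.
`solF N a b f n t` is `v_{n,t}`. -/
def solF (N : ℕ) (a b f : ℕ → ℝ) : ℕ → ℕ → ℝ
  | n, 0 => if n = 0 then f 0 else 0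
  | n, 1 =>
      if n = 0 then f 1
      else if N < n then 0
      else a n * solF N a b f (n + 1) 0 + a (n - 1) * solF N a b f (n - 1) 0
        + b n * solF N a b f n 0
  | n, t + 2 =>
      if n = 0 then f (t + 2)
      else if N < n then 0
      else a n * solF N a b f (n + 1) (t + 1) + a (n - 1) * solF N a b f (n - 1) (t + 1)
        + b n * solF N a b f n (t + 1) - solF N a b f n t
  termination_by n t => t

/-- `φ_n(λ)`: `φ_0 = 0`, `φ_1 = 1`,
`a_n φ_{n+1} + a_{n-1} φ_{n-1} + b_n φ_n = λ φ_n` for `n ≥ 1`. -/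
noncomputable def phiP (a b : ℕ → ℝ) : ℕ → ℝ → ℝ
  | 0, _ => 0
  | 1, _ => 1
  | n + 2, x => ((x - b (n + 1)) * phiP a b (n + 1) x - a n * phiP a b n x) / a (n + 1)

/-!
Since `φ_{N+1}(λ_k) = 0`, the three-term recurrence says that `φ^k` is an eigenvector of `A^N`
for the eigenvalue `λ_k`, and the Christoffel–Darboux identity makes these eigenvectors
pairwise orthogonal. For the matrix `Φ` with columns `φ^k` this reads `Φᵀ Φ = diag ρ`, hence
`Φ diag(ρ)⁻¹ Φᵀ = 1`, i.e. `∑_k ρ_k⁻¹ φ_n(λ_k) = δ_{n1}` (as `φ_1 = 1`): the forcing `f_t e_1`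
coming from the boundary has coordinates `ρ_k⁻¹ f_t` in this eigenbasis. Each coordinate then
solves the scalar recursion `c_{t+1} + c_{t-1} - λ_k c_t = ρ_k⁻¹ f_t`, `c_0 = 0`, whose solution
is the convolution of `f` with the Chebyshev polynomials `𝒯_s(λ_k)`. As the finite system
determines `v^f` uniquely, the spectral sum is `v^f`.
-/

open Finset Matrix

theorem Matrix.mul_diagonal_inv_mul_transpose_eq_one {n K : Type*} [Fintype n] [DecidableEq n]
    [Field K] {A : Matrix n n K} {d : n → K} (h : Aᵀ * A = diagonal d) (hd : ∀ i, d i ≠ 0) :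
    A * diagonal d⁻¹ * Aᵀ = 1 := by
  rw [Matrix.mul_assoc]
  refine mul_eq_one_comm.1 ?_
  rw [Matrix.mul_assoc, h, diagonal_mul_diagonal]
  simp [hd]

section OrthogonalPolynomials

variable {a b : ℕ → ℝ}

@[simp] lemma phiP_zero (a b : ℕ → ℝ) (x : ℝ) : phiP a b 0 x = 0 := by simp [phiP]

@[simp] lemma phiP_one (a b : ℕ → ℝ) (x : ℝ) : phiP a b 1 x = 1 := by simp [phiP]

lemma phiP_recurrence {n : ℕ} (ha : a (n + 1) ≠ 0) (x : ℝ) :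
    a (n + 1) * phiP a b (n + 2) x + a n * phiP a b n x + b (n + 1) * phiP a b (n + 1) x
      = x * phiP a b (n + 1) x := by
  rw [phiP]
  field_simp
  ring

/-- Christoffel–Darboux identity. -/
lemma sub_mul_sum_phiP_mul_phiP (ha : ∀ n, a (n + 1) ≠ 0) (x y : ℝ) (n : ℕ) :
    (x - y) * ∑ i ∈ range n, phiP a b (i + 1) x * phiP a b (i + 1) y
      = a n * (phiP a b (n + 1) x * phiP a b n y - phiP a b n x * phiP a b (n + 1) y) := by
  induction n with
  | zero => simp
  | succ n ih =>
    rw [sum_range_succ, mul_add, ih]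
    linear_combination phiP a b (n + 1) x * phiP_recurrence (ha n) y
      - phiP a b (n + 1) y * phiP_recurrence (ha n) x

lemma sum_phiP_mul_phiP_eq_zero (ha : ∀ n, a (n + 1) ≠ 0) {N : ℕ} {x y : ℝ}
    (hx : phiP a b (N + 1) x = 0) (hy : phiP a b (N + 1) y = 0) (hxy : x ≠ y) :
    ∑ i ∈ range N, phiP a b (i + 1) x * phiP a b (i + 1) y = 0 := by
  have h := sub_mul_sum_phiP_mul_phiP (b := b) ha x y N
  rw [hx, hy, zero_mul, mul_zero, sub_zero, mul_zero] at h
  exact (mul_eq_zero.1 h).resolve_left (sub_ne_zero.2 hxy)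

noncomputable def phiNormSq (a b : ℕ → ℝ) (N : ℕ) (x : ℝ) : ℝ :=
  ∑ i ∈ Icc 1 N, phiP a b i x ^ 2

lemma phiNormSq_eq_sum_fin (a b : ℕ → ℝ) (N : ℕ) (x : ℝ) :
    phiNormSq a b N x = ∑ i : Fin N, phiP a b (i + 1) x ^ 2 := by
  rw [phiNormSq, ← Ico_add_one_right_eq_Icc, sum_Ico_eq_sum_range,
    Fin.sum_univ_eq_sum_range (fun i => phiP a b (i + 1) x ^ 2)]
  simp only [add_tsub_cancel_right, add_comm 1]

lemma one_le_phiNormSq (a b : ℕ → ℝ) {N : ℕ} (hN : 1 ≤ N) (x : ℝ) : 1 ≤ phiNormSq a b N x := by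
  simpa [phiNormSq] using single_le_sum (f := fun i => phiP a b i x ^ 2) (fun i _ => sq_nonneg _)
    (mem_Icc.2 ⟨le_rfl, hN⟩)

noncomputable def phiMatrix (a b : ℕ → ℝ) (N : ℕ) {ι : Type*} (lam : ι → ℝ) : Matrix (Fin N) ι ℝ :=
  of fun i k => phiP a b (i + 1) (lam k)

lemma phiMatrix_transpose_mul_self (ha : ∀ n, a (n + 1) ≠ 0) {N : ℕ}
    {ι : Type*} [Fintype ι] [DecidableEq ι] {lam : ι → ℝ} (hinj : Function.Injective lam)
    (hroot : ∀ k, phiP a b (N + 1) (lam k) = 0) :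
    (phiMatrix a b N lam)ᵀ * phiMatrix a b N lam = diagonal fun k => phiNormSq a b N (lam k) := by
  ext k l
  rw [mul_apply, diagonal_apply]
  simp only [transpose_apply, phiMatrix, of_apply]
  split_ifs with hkl
  · rw [hkl, phiNormSq_eq_sum_fin]
    simp only [sq]
  · rw [Fin.sum_univ_eq_sum_range (fun i => phiP a b (i + 1) (lam k) * phiP a b (i + 1) (lam l))]
    exact sum_phiP_mul_phiP_eq_zero ha (hroot k) (hroot l) (hinj.ne hkl)

lemma sum_inv_phiNormSq_mul_phiP (ha : ∀ n, a (n + 1) ≠ 0) {N : ℕ}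
    {lam : Fin N → ℝ} (hinj : Function.Injective lam)
    (hroot : ∀ k, phiP a b (N + 1) (lam k) = 0) (i j : Fin N) :
    ∑ k, phiP a b (i + 1) (lam k) * (phiNormSq a b N (lam k))⁻¹ * phiP a b (j + 1) (lam k)
      = if i = j then 1 else 0 := by
  have hN : 1 ≤ N := Nat.one_le_of_lt i.isLt
  have h := congrFun (congrFun (Matrix.mul_diagonal_inv_mul_transpose_eq_one
    (phiMatrix_transpose_mul_self ha hinj hroot)
    fun k => (zero_lt_one.trans_le (one_le_phiNormSq a b hN _)).ne') i) j
  simpa [mul_apply, diagonal_apply, phiMatrix, one_apply] using h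

noncomputable def phiRow (a b : ℕ → ℝ) {ι : Type*} (lam : ι → ℝ) (n : ℕ) : ι → ℝ :=
  fun k => phiP a b n (lam k)

@[simp] lemma phiRow_zero (a b : ℕ → ℝ) {ι : Type*} (lam : ι → ℝ) : phiRow a b lam 0 = 0 := by
  ext
  simp [phiRow]

lemma inv_phiNormSq_dotProduct_phiRow (ha : ∀ n, a (n + 1) ≠ 0) {N : ℕ}
    {lam : Fin N → ℝ} (hinj : Function.Injective lam)
    (hroot : ∀ k, phiP a b (N + 1) (lam k) = 0) {m : ℕ} (hm : m < N) :
    (fun k => (phiNormSq a b N (lam k))⁻¹) ⬝ᵥ phiRow a b lam (m + 1) = if m = 0 then 1 else 0 := by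
  have h := sum_inv_phiNormSq_mul_phiP ha hinj hroot ⟨m, hm⟩ ⟨0, by omega⟩
  simp only [zero_add, phiP_one, mul_one, Fin.mk.injEq] at h
  rw [← h, dotProduct]
  exact sum_congr rfl fun k _ => mul_comm _ _

variable {ι : Type*} [Fintype ι] {lam : ι → ℝ}

lemma mul_dotProduct_phiRow {m : ℕ} (ha : a (m + 1) ≠ 0) (c : ι → ℝ) :
    (lam * c) ⬝ᵥ phiRow a b lam (m + 1)
      = a (m + 1) * c ⬝ᵥ phiRow a b lam (m + 2) + a m * c ⬝ᵥ phiRow a b lam m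
        + b (m + 1) * c ⬝ᵥ phiRow a b lam (m + 1) := by
  simp only [dotProduct, phiRow, Pi.mul_apply, mul_sum, ← sum_add_distrib]
  refine sum_congr rfl fun k _ => ?_
  linear_combination - c k * phiP_recurrence ha (lam k)

/-- `g` is the value in row `0`, which enters row `1` with the weight `a 0 = 1`. -/
lemma dotProduct_phiRow_step (ha0 : a 0 = 1) {m : ℕ} (ha : a (m + 1) ≠ 0) {w : ι → ℝ}
    (hw : w ⬝ᵥ phiRow a b lam (m + 1) = if m = 0 then 1 else 0) (c₀ c₁ : ι → ℝ) (g : ℝ) :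
    (lam * c₁ - c₀ + g • w) ⬝ᵥ phiRow a b lam (m + 1)
      = a (m + 1) * c₁ ⬝ᵥ phiRow a b lam (m + 2)
        + a m * (if m = 0 then g else c₁ ⬝ᵥ phiRow a b lam m)
        + b (m + 1) * c₁ ⬝ᵥ phiRow a b lam (m + 1) - c₀ ⬝ᵥ phiRow a b lam (m + 1) := by
  rw [add_dotProduct, sub_dotProduct, smul_dotProduct, mul_dotProduct_phiRow ha, hw]
  split_ifs with hm
  · subst hm
    simp [ha0]
    ring
  · simp only [smul_eq_mul, mul_zero, add_zero]

end OrthogonalPolynomials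

def chebConv (x : ℝ) (f : ℕ → ℝ) (t : ℕ) : ℝ :=
  ∑ s ∈ range (t + 1), chebU x s * f (t - s)

@[simp] lemma chebConv_zero (x : ℝ) (f : ℕ → ℝ) : chebConv x f 0 = 0 := by
  simp [chebConv, chebU]

@[simp] lemma chebConv_one (x : ℝ) (f : ℕ → ℝ) : chebConv x f 1 = f 0 := by
  simp [chebConv, chebU, sum_range_succ]

lemma chebConv_add_two (x : ℝ) (f : ℕ → ℝ) (t : ℕ) :
    chebConv x f (t + 2) = x * chebConv x f (t + 1) - chebConv x f t + f (t + 1) := by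
  have hsucc : ∀ s ∈ range (t + 1),
      chebU x (s + 2) * f (t - s) = x * (chebU x (s + 1) * f (t - s)) - chebU x s * f (t - s) :=
    fun s _ => by rw [chebU]; ring
  simp only [chebConv, sum_range_succ' _ (t + 2), sum_range_succ' _ (t + 1),
    show ∀ s, t + 2 - (s + 1 + 1) = t - s by omega, show ∀ s, t + 1 - (s + 1) = t - s by omega,
    sum_congr rfl hsucc, sum_sub_distrib, ← mul_sum]
  simp [chebU]

section FiniteSystem

variable {N : ℕ} {a b f : ℕ → ℝ}

@[simp] lemma solF_zero_left (t : ℕ) : solF N a b f 0 t = f t := by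
  rcases t with _ | _ | t <;> simp [solF]

lemma solF_of_lt {n : ℕ} (hn : N < n) (t : ℕ) : solF N a b f n t = 0 := by
  rcases t with _ | _ | t <;> simp [solF, hn, Nat.ne_zero_of_lt hn]

lemma solF_succ_zero (m : ℕ) : solF N a b f (m + 1) 0 = 0 := by
  simp [solF]

lemma solF_succ_one {m : ℕ} (hm : m < N) :
    solF N a b f (m + 1) 1 = a (m + 1) * solF N a b f (m + 2) 0 + a m * solF N a b f m 0
      + b (m + 1) * solF N a b f (m + 1) 0 := by
  conv_lhs => rw [solF]
  rw [if_neg (by omega), if_neg (by omega), Nat.add_sub_cancel]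

lemma solF_succ_add_two {m : ℕ} (hm : m < N) (t : ℕ) :
    solF N a b f (m + 1) (t + 2) = a (m + 1) * solF N a b f (m + 2) (t + 1)
      + a m * solF N a b f m (t + 1) + b (m + 1) * solF N a b f (m + 1) (t + 1)
      - solF N a b f (m + 1) t := by
  conv_lhs => rw [solF]
  rw [if_neg (by omega), if_neg (by omega), Nat.add_sub_cancel]

theorem solF_eq_of_recurrence {u : ℕ → ℕ → ℝ} (h_left : ∀ t, u 0 t = f t)
    (h_right : ∀ t, u (N + 1) t = 0) (h_zero : ∀ m < N, u (m + 1) 0 = 0)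
    (h_one : ∀ m < N, u (m + 1) 1
      = a (m + 1) * u (m + 2) 0 + a m * u m 0 + b (m + 1) * u (m + 1) 0)
    (h_succ : ∀ m < N, ∀ t, u (m + 1) (t + 2)
      = a (m + 1) * u (m + 2) (t + 1) + a m * u m (t + 1) + b (m + 1) * u (m + 1) (t + 1)
        - u (m + 1) t) :
    ∀ t n, n ≤ N + 1 → solF N a b f n t = u n t := by
  intro t
  induction t using Nat.strong_induction_on with
  | _ t ih =>
    intro n hn
    rcases n with _ | m
    · rw [solF_zero_left, h_left]
    obtain rfl | hm : m = N ∨ m < N := by omega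
    · rw [solF_of_lt (Nat.lt_succ_self _), h_right]
    rcases t with _ | _ | t
    · rw [solF_succ_zero, h_zero m hm]
    · rw [solF_succ_one hm, h_one m hm, ih 0 one_pos (m + 2) (by omega),
        ih 0 one_pos m (by omega), ih 0 one_pos (m + 1) (by omega)]
    · rw [solF_succ_add_two hm, h_succ m hm, ih (t + 1) (by omega) (m + 2) (by omega),
        ih (t + 1) (by omega) m (by omega), ih (t + 1) (by omega) (m + 1) (by omega),
        ih t (by omega) (m + 1) (by omega)]

end FiniteSystem

theorem solF_eq_dotProduct_phiRow {ι : Type*} [Fintype ι] {N : ℕ} {a b : ℕ → ℝ}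
    {lam w : ι → ℝ} (ha0 : a 0 = 1) (ha : ∀ n, a (n + 1) ≠ 0)
    (hroot : ∀ k, phiP a b (N + 1) (lam k) = 0)
    (hw : ∀ m < N, w ⬝ᵥ phiRow a b lam (m + 1) = if m = 0 then 1 else 0) (f : ℕ → ℝ)
    {n : ℕ} (hn : 1 ≤ n) (hnN : n ≤ N) (t : ℕ) :
    solF N a b f n t = (fun k => w k * chebConv (lam k) f t) ⬝ᵥ phiRow a b lam n := by
  set c : ℕ → ι → ℝ := fun t k => w k * chebConv (lam k) f t
  have hc0 : c 0 = 0 := by ext; simp [c]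
  have hc1 : c 1 = lam * c 0 - c 0 + f 0 • w := by ext; simp [c, mul_comm]
  have hc : ∀ t, c (t + 2) = lam * c (t + 1) - c t + f (t + 1) • w := by
    intro t
    ext k
    simp only [c, chebConv_add_two, Pi.add_apply, Pi.sub_apply, Pi.mul_apply, Pi.smul_apply,
      smul_eq_mul]
    ring
  have hrow : phiRow a b lam (N + 1) = 0 := funext hroot
  have h := solF_eq_of_recurrence (N := N) (a := a) (b := b) (f := f)
    (u := fun n t => if n = 0 then f t else c t ⬝ᵥ phiRow a b lam n)
    (by simp) (by simp [hrow]) (fun m _ => by simp [hc0])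
    (fun m hm => by
      simp only [Nat.add_one_ne_zero, if_false]
      rw [hc1, dotProduct_phiRow_step ha0 (ha m) (hw m hm)]
      simp [hc0])
    (fun m hm t => by
      simp only [Nat.add_one_ne_zero, if_false]
      rw [hc t, dotProduct_phiRow_step ha0 (ha m) (hw m hm)])
    t n (by omega)
  rwa [if_neg (by omega)] at h

theorem finite_system_spectral_representation_general
    (N : ℕ) (a b : ℕ → ℝ) (ha0 : a 0 = 1) (hapos : ∀ n, 0 < a n)
    (lam : Fin N → ℝ) (hinj : Function.Injective lam)
    (hroot : ∀ k, phiP a b (N + 1) (lam k) = 0)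
    (f : ℕ → ℝ) :
    ∀ n t : ℕ, 1 ≤ n → n ≤ N →
      solF N a b f n t =
        ∑ k : Fin N,
          ((∑ i ∈ Finset.Icc 1 N, (phiP a b i (lam k)) ^ 2)⁻¹
              * ∑ s ∈ Finset.range (t + 1), chebU (lam k) s * f (t - s))
            * phiP a b n (lam k) := by
  intro n t hn hnN
  have ha : ∀ n, a (n + 1) ≠ 0 := fun n => (hapos (n + 1)).ne'
  exact solF_eq_dotProduct_phiRow ha0 ha hroot
    (fun m hm => inv_phiNormSq_dotProduct_phiRow ha hinj hroot hm) f hn hnN t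

/-- spectral representation of the solution of the finite system:
`v^f_{n,t} = Σ_{k=1}^N c^k_t φ_n(λ_k)`, `c^k_t = ρ_k⁻¹ Σ_{s=0}^t 𝒯_s(λ_k) f_{t-s}`. -/
theorem finite_system_spectral_representation
    (N : ℕ) (hN : 1 ≤ N) (a b : ℕ → ℝ) (ha0 : a 0 = 1) (hapos : ∀ n, 0 < a n)
    (lam : Fin N → ℝ) (hinj : Function.Injective lam)
    (hroot : ∀ k, phiP a b (N + 1) (lam k) = 0)
    (f : ℕ → ℝ) :
    ∀ n t : ℕ, 1 ≤ n → n ≤ N →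
      solF N a b f n t =
        ∑ k : Fin N,
          ((∑ i ∈ Finset.Icc 1 N, (phiP a b i (lam k)) ^ 2)⁻¹
              * ∑ s ∈ Finset.range (t + 1), chebU (lam k) s * f (t - s))
            * phiP a b n (lam k) :=
  finite_system_spectral_representation_general N a b ha0 hapos lam hinj hroot f
end

section
/- Let W^T_N f = (v^f_{1,T},…,v^f_{N,T}) and C^T_N = (W^T_N)ᵀW^T_N for the finite system of size N. Let D_-^M : ℝ^M → ℝ^M be the shift (D_- f)_n = f_{n−1} (with (D_- f)_0 = 0, indices 0,…,M−1), let P : ℝ^{N+1} → ℝ^N delete the last coordinate and P* = Pᵀ extend by zero, and set B^N = P (D_-^{N+1})ᵀ C^{N+1}_N P* + C^N_N D_-^N. Then for every nonzero f ∈ ℝ^N and every λ ∈ ℝ: B^N f = λ C^N_N f if and only if W^N_N f is an eigenvector of the Jacobi matrix A^N with eigenvalue λ. -/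
/-!
Everything is read through `W = W^N_N`. Time invariance of the system gives
`W^N_N = W^{N+1}_N D_- P*`, and the recurrence at time `N`, when the control is already
switched off, gives `A^N W^N_N = W^{N+1}_N P* + W^N_N D_-`; hence `B^N = Wᵀ A^N W` while
`C^N_N = Wᵀ W`. An impulse applied at time `j` reaches site `n` first at time `n + j`, with
amplitude `a_0 ⋯ a_{n-1} ≠ 0`, so `W` is triangular up to the order of its columns and is
invertible. Cancelling `Wᵀ` turns `B^N f = λ C^N_N f` into `A^N (W f) = λ W f`, and
`W f ≠ 0` because `f ≠ 0`.
-/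

open scoped BigOperators
open Matrix

/-- Extension of a finite control by zero. -/
def ctrl (T : ℕ) (f : Fin T → ℝ) : ℕ → ℝ := fun t => if h : t < T then f ⟨t, h⟩ else 0

/-- The control operator `W^T_N : ℝ^T → ℝ^N`, `f ↦ (v^f_{1,T},…,v^f_{N,T})`, as a matrix. -/
def WFinMat (N : ℕ) (a b : ℕ → ℝ) (T : ℕ) : Matrix (Fin N) (Fin T) ℝ :=
  Matrix.of fun n j => solF N a b (ctrl T (fun k => if k = j then 1 else 0)) ((n : ℕ) + 1) T

/-- Connecting operator `C^T_N = (W^T_N)ᵀ W^T_N`. -/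
def CFinMat (N : ℕ) (a b : ℕ → ℝ) (T : ℕ) : Matrix (Fin T) (Fin T) ℝ :=
  (WFinMat N a b T)ᵀ * WFinMat N a b T

/-- The shift matrix `D_- : ℝ^M → ℝ^M`, `(D_- f)_n = f_{n-1}` (and `(D_- f)_0 = 0`). -/
def DminusMat (M : ℕ) : Matrix (Fin M) (Fin M) ℝ :=
  Matrix.of fun i j => if (j : ℕ) + 1 = (i : ℕ) then 1 else 0

/-- The matrix `P : ℝ^{N+1} → ℝ^N` deleting the last coordinate. -/
def Pmat (N : ℕ) : Matrix (Fin N) (Fin (N + 1)) ℝ :=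
  Matrix.of fun i j => if (i : ℕ) = (j : ℕ) then 1 else 0

/-- `B^N = P (D_-^{N+1})ᵀ C^{N+1}_N P* + C^N_N D_-^N`. -/
def BMat (N : ℕ) (a b : ℕ → ℝ) : Matrix (Fin N) (Fin N) ℝ :=
  Pmat N * (DminusMat (N + 1))ᵀ * CFinMat N a b (N + 1) * (Pmat N)ᵀ
    + CFinMat N a b N * DminusMat N

/-- The `N×N` Jacobi matrix `A^N`. -/
def jacobiMat (N : ℕ) (a b : ℕ → ℝ) : Matrix (Fin N) (Fin N) ℝ :=
  Matrix.of fun i j =>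
    if (i : ℕ) = (j : ℕ) then b ((i : ℕ) + 1)
    else if (i : ℕ) + 1 = (j : ℕ) then a ((i : ℕ) + 1)
    else if (j : ℕ) + 1 = (i : ℕ) then a ((j : ℕ) + 1)
    else 0

namespace solF

variable {N : ℕ} {a b g : ℕ → ℝ}

theorem zero_right (n : ℕ) : solF N a b g n 0 = if n = 0 then g 0 else 0 := by
  rw [solF]

theorem zero_left (t : ℕ) : solF N a b g 0 t = g t := by
  rcases t with _ | _ | t <;> simp [solF]

theorem eq_zero_of_lt {n : ℕ} (hn : N < n) (t : ℕ) : solF N a b g n t = 0 := by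
  rcases t with _ | _ | t <;> simp [solF, hn, Nat.ne_zero_of_lt hn]

/-- At `t = 0` the last term is `solF N a b g n 0 = 0` (truncated subtraction), which plays the
role of `v_{n,-1} = 0`. -/
theorem succ_right {n : ℕ} (hn : n ≠ 0) (hnN : n ≤ N) (t : ℕ) :
    solF N a b g n (t + 1) = a n * solF N a b g (n + 1) t + a (n - 1) * solF N a b g (n - 1) t
      + b n * solF N a b g n t - solF N a b g n (t - 1) := by
  rcases t with _ | t
  · rw [solF.eq_2]; simp [hn, hnN.not_gt, zero_right]
  · rw [solF.eq_3]; simp [hn, hnN.not_gt]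

theorem eq_of_recurrence {v : ℕ → ℕ → ℝ} (hleft : ∀ t, v 0 t = g t)
    (hinit : ∀ n, n ≠ 0 → v n 0 = 0) (hright : ∀ n, N < n → ∀ t, v n t = 0)
    (hrec : ∀ n, n ≠ 0 → n ≤ N → ∀ t, v n (t + 1) =
      a n * v (n + 1) t + a (n - 1) * v (n - 1) t + b n * v n t - v n (t - 1))
    (n t : ℕ) : v n t = solF N a b g n t := by
  induction t using Nat.strong_induction_on generalizing n with
  | _ t ih =>
  rcases eq_or_ne n 0 with rfl | hn
  · rw [hleft, zero_left]
  rcases lt_or_ge N n with hNn | hnN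
  · rw [hright n hNn, eq_zero_of_lt hNn]
  rcases t with _ | t
  · rw [hinit n hn, zero_right, if_neg hn]
  rw [hrec n hn hnN, succ_right hn hnN, ih t (by omega), ih t (by omega), ih t (by omega),
    ih (t - 1) (by omega)]

theorem one_right_eq_zero (hg : g 0 = 0) {n : ℕ} (hn : n ≠ 0) : solF N a b g n 1 = 0 := by
  rcases lt_or_ge N n with hNn | hnN
  · exact eq_zero_of_lt hNn 1
  · simp [succ_right hn hnN, zero_right, hn, hg]

theorem succ_right_eq_advance (hg : g 0 = 0) (n t : ℕ) :
    solF N a b g n (t + 1) = solF N a b (fun s => g (s + 1)) n t := by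
  refine eq_of_recurrence (v := fun n t => solF N a b g n (t + 1)) (fun t => zero_left _)
    (fun n hn => one_right_eq_zero hg hn) (fun n hn t => eq_zero_of_lt hn _)
    (fun n hn hnN t => ?_) n t
  rw [succ_right hn hnN (t + 1)]
  rcases t with _ | t
  · simp [zero_right, one_right_eq_zero hg hn, hn]
  · rfl

theorem single_eq_zero (j : ℕ) {n t : ℕ} (h : t < n + j) :
    solF N a b (Pi.single j 1) n t = 0 := by
  induction t using Nat.strong_induction_on generalizing n with
  | _ t ih =>
  rcases eq_or_ne n 0 with rfl | hn
  · rw [zero_left, Pi.single_apply, if_neg (by omega)]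
  rcases lt_or_ge N n with hNn | hnN
  · exact eq_zero_of_lt hNn t
  rcases t with _ | t
  · rw [zero_right, if_neg hn]
  rw [succ_right hn hnN, ih t (by omega) (by omega), ih t (by omega) (by omega),
    ih t (by omega) (by omega), ih (t - 1) (by omega) (by omega)]
  ring

theorem single_self_add (j : ℕ) {n : ℕ} (hn : n ≤ N) :
    solF N a b (Pi.single j 1) n (n + j) = ∏ k ∈ Finset.range n, a k := by
  induction n with
  | zero => simp [zero_left]
  | succ n ih =>
    rw [show n + 1 + j = n + j + 1 by ring, succ_right (Nat.add_one_ne_zero n) hn,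
      Nat.add_sub_cancel, ih (by omega), single_eq_zero j (by omega), single_eq_zero j (by omega),
      single_eq_zero j (by omega), Finset.prod_range_succ]
    ring

theorem single_succ (j n t : ℕ) :
    solF N a b (Pi.single (j + 1) 1) n (t + 1) = solF N a b (Pi.single j 1) n t := by
  rw [succ_right_eq_advance (by simp)]
  congr
  funext s
  simp [Pi.single_apply]

end solF

theorem jacobiMat_mulVec_apply {N : ℕ} {a b : ℕ → ℝ} (u : ℕ → ℝ) (h0 : u 0 = 0)
    (hN : u (N + 1) = 0) (i : Fin N) :
    (jacobiMat N a b *ᵥ fun j : Fin N => u (j + 1)) i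
      = a (i + 1) * u (i + 2) + a i * u i + b (i + 1) * u (i + 1) := by
  obtain ⟨i, hi⟩ := i
  have hterm : ∀ j : ℕ,
      (if i = j then b (i + 1) else if i + 1 = j then a (i + 1)
        else if j + 1 = i then a (j + 1) else 0) * u (j + 1)
      = (if i + 1 = j then a (i + 1) * u (i + 2) else 0)
        + (if j + 1 = i then a i * u i else 0) + (if i = j then b (i + 1) * u (i + 1) else 0) := by
    intro j
    split_ifs <;> subst_vars <;> first | omega | ring
  simp only [mulVec, dotProduct, jacobiMat, of_apply]
  rw [Fin.sum_univ_eq_sum_range (fun j => (if i = j then b (i + 1) else if i + 1 = j then a (i + 1)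
    else if j + 1 = i then a (j + 1) else 0) * u (j + 1)) N]
  simp only [hterm, Finset.sum_add_distrib, Finset.sum_ite_eq, Finset.mem_range, if_pos hi]
  congr 2
  · split_ifs with h
    · rfl
    · rw [show i + 2 = N + 1 by omega, hN, mul_zero]
  · rcases i with _ | i
    · simp [h0]
    · simp [Finset.sum_ite_eq', show i < N by omega]

theorem jacobiMat_mulVec_solF {N : ℕ} {a b g : ℕ → ℝ} {t : ℕ} (hg : g t = 0) (i : Fin N) :
    (jacobiMat N a b *ᵥ fun j : Fin N => solF N a b g (j + 1) t) i
      = solF N a b g (i + 1) (t + 1) + solF N a b g (i + 1) (t - 1) := by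
  refine (jacobiMat_mulVec_apply (fun n => solF N a b g n t) (by rw [solF.zero_left, hg])
    (solF.eq_zero_of_lt N.lt_succ_self t) i).trans ?_
  rw [solF.succ_right (Nat.add_one_ne_zero i) i.isLt, Nat.add_sub_cancel]
  ring

theorem WFinMat_apply (N : ℕ) (a b : ℕ → ℝ) (T : ℕ) (i : Fin N) (j : Fin T) :
    WFinMat N a b T i j = solF N a b (Pi.single (j : ℕ) 1) (i + 1) T := by
  rw [WFinMat, of_apply]
  congr
  funext t
  simp only [ctrl, Pi.single_apply]
  split_ifs <;> simp_all [Fin.ext_iff]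

theorem mul_transpose_Pmat {m : Type*} {T : ℕ} (M : Matrix m (Fin (T + 1)) ℝ) :
    M * (Pmat T)ᵀ = M.submatrix id Fin.castSucc := by
  ext i j
  have hcond : ∀ k : Fin (T + 1), (j : ℕ) = k ↔ j.castSucc = k := by simp [Fin.ext_iff]
  simp only [mul_apply, transpose_apply, Pmat, of_apply, mul_ite, mul_one, mul_zero, hcond,
    Finset.sum_ite_eq, Finset.mem_univ, if_true, submatrix_apply, id]

theorem mul_DminusMat_apply {m : Type*} {T : ℕ} (M : Matrix m (Fin T) ℝ) (i : m) (j : Fin T) :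
    (M * DminusMat T) i j = if h : (j : ℕ) + 1 < T then M i ⟨j + 1, h⟩ else 0 := by
  simp only [mul_apply, DminusMat, of_apply, mul_ite, mul_one, mul_zero]
  split_ifs with h
  · have hcond : ∀ k : Fin T, (j : ℕ) + 1 = k ↔ ⟨j + 1, h⟩ = k := by simp [Fin.ext_iff]
    simp only [hcond, Finset.sum_ite_eq, Finset.mem_univ, if_true]
  · exact Finset.sum_eq_zero fun k _ => if_neg (by omega)

theorem jacobiMat_mul_WFinMat (N : ℕ) (a b : ℕ → ℝ) (T : ℕ) :
    jacobiMat N a b * WFinMat N a b T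
      = WFinMat N a b (T + 1) * (Pmat T)ᵀ + WFinMat N a b T * DminusMat T := by
  ext i j
  have hcol : (jacobiMat N a b * WFinMat N a b T) i j
      = (jacobiMat N a b *ᵥ fun k : Fin N => solF N a b (Pi.single (j : ℕ) 1) (k + 1) T) i := by
    simp only [mul_apply, mulVec, dotProduct, WFinMat_apply]
  rw [hcol, jacobiMat_mulVec_solF (by simp [j.isLt.ne']), Matrix.add_apply, mul_transpose_Pmat,
    submatrix_apply, mul_DminusMat_apply, WFinMat_apply]
  congr 1
  split_ifs with h
  · obtain ⟨s, rfl⟩ : ∃ s, T = s + 1 := ⟨T - 1, by omega⟩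
    rw [WFinMat_apply, solF.single_succ]
    rfl
  · exact solF.single_eq_zero _ (by omega)

theorem WFinMat_eq_mul (N : ℕ) (a b : ℕ → ℝ) (T : ℕ) :
    WFinMat N a b T = WFinMat N a b (T + 1) * DminusMat (T + 1) * (Pmat T)ᵀ := by
  ext i j
  rw [mul_transpose_Pmat, submatrix_apply, mul_DminusMat_apply, dif_pos (by simp),
    WFinMat_apply, WFinMat_apply]
  exact (solF.single_succ _ _ _).symm

theorem BMat_eq (N : ℕ) (a b : ℕ → ℝ) :
    BMat N a b = (WFinMat N a b N)ᵀ * jacobiMat N a b * WFinMat N a b N := by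
  have hT : (WFinMat N a b N)ᵀ = Pmat N * (DminusMat (N + 1))ᵀ * (WFinMat N a b (N + 1))ᵀ := by
    conv_lhs => rw [WFinMat_eq_mul]
    simp only [transpose_mul, transpose_transpose, Matrix.mul_assoc]
  rw [BMat, CFinMat, CFinMat, Matrix.mul_assoc _ (jacobiMat N a b), jacobiMat_mul_WFinMat,
    Matrix.mul_add, hT]
  simp only [Matrix.mul_assoc]

theorem WFinMat_det_ne_zero {N : ℕ} {a : ℕ → ℝ} (b : ℕ → ℝ) (ha : ∀ k < N, a k ≠ 0) :
    (WFinMat N a b N).det ≠ 0 := by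
  set M := (WFinMat N a b N).submatrix id Fin.revPerm
  have htri : M.IsUpperTriangular := fun i j (hji : j < i) => by
    simp only [M, submatrix_apply, id, Fin.revPerm_apply, WFinMat_apply, Fin.val_rev]
    exact solF.single_eq_zero _ (by omega)
  have hdiag : ∀ i, M i i = ∏ k ∈ Finset.range (i + 1), a k := fun i => by
    simp only [M, submatrix_apply, id, Fin.revPerm_apply, WFinMat_apply, Fin.val_rev]
    convert solF.single_self_add (N - (i + 1)) i.isLt using 2
    omega
  have hM : M.det ≠ 0 := by
    rw [det_of_isUpperTriangular htri]
    exact Finset.prod_ne_zero_iff.2 fun i _ => by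
      rw [hdiag]
      exact Finset.prod_ne_zero_iff.2 fun k hk => ha k (by simp at hk; omega)
  rw [det_permute'] at hM
  exact right_ne_zero_of_mul hM

theorem generalized_spectral_problem_iff_eigenvector_general
    (N : ℕ) (a b : ℕ → ℝ) (hapos : ∀ n, 0 < a n)
    (f : Fin N → ℝ) (hf : f ≠ 0) (lam : ℝ) :
    (BMat N a b).mulVec f = lam • (CFinMat N a b N).mulVec f ↔
      ((jacobiMat N a b).mulVec ((WFinMat N a b N).mulVec f)
          = lam • (WFinMat N a b N).mulVec f
        ∧ (WFinMat N a b N).mulVec f ≠ 0) := by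
  have hW : IsUnit (WFinMat N a b N) :=
    (isUnit_iff_isUnit_det _).2 (WFinMat_det_ne_zero b fun k _ => (hapos k).ne').isUnit
  have hWf : (WFinMat N a b N).mulVec f ≠ 0 :=
    (mulVec_injective_iff_isUnit.2 hW).ne_iff' (mulVec_zero _) |>.2 hf
  rw [BMat_eq, CFinMat, ← mulVec_mulVec, ← mulVec_mulVec, ← mulVec_mulVec, ← mulVec_smul,
    (mulVec_injective_iff_isUnit.2 ((isUnit_transpose _).2 hW)).eq_iff, and_iff_left hWf]

/-- for nonzero `f` and `λ ∈ ℝ`, `B^N f = λ C^N_N f` iff `W^N_N f` is an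
eigenvector of the Jacobi matrix `A^N` with eigenvalue `λ`. -/
theorem generalized_spectral_problem_iff_eigenvector
    (N : ℕ) (hN : 1 ≤ N) (a b : ℕ → ℝ) (ha0 : a 0 = 1) (hapos : ∀ n, 0 < a n)
    (f : Fin N → ℝ) (hf : f ≠ 0) (lam : ℝ) :
    (BMat N a b).mulVec f = lam • (CFinMat N a b N).mulVec f ↔
      ((jacobiMat N a b).mulVec ((WFinMat N a b N).mulVec f)
          = lam • (WFinMat N a b N).mulVec f
        ∧ (WFinMat N a b N).mulVec f ≠ 0) :=
  generalized_spectral_problem_iff_eigenvector_general N a b hapos f hf lam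
end

section
/- Let N ≥ 1 and let s_0, …, s_{2N−1} be real numbers such that the Hankel matrices satisfy S^N_0 − S^N_1 ≥ 0 (positive semidefinite) and S^N_1 > 0 (positive definite). Then the sequence is completely monotonic up to order 2N−1: (−1)^k (Δ^k s)_n ≥ 0 for all integers k, n ≥ 0 with k + n ≤ 2N−1. -/
/-!
Let `L` be the linear functional on `ℝ[X]` with `L (X ^ j) = s j`; then
`(-1) ^ k (Δ ^ k s) n = L (X ^ n (1 - X) ^ k)`. For `deg q < N` the quadratic forms of `S^N_1` and
`S^N_0 - S^N_1` at the coefficient vector of `q` are `L (X q²)` and `L ((1 - X) q²)`, so both are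
nonnegative. According to the parity of `a`, every `X ^ a (1 - X) ^ b` with `a + b = 2N - 1` is of
one of these two forms, and lower degrees follow by downward induction from
`X ^ a (1 - X) ^ b = X ^ (a + 1) (1 - X) ^ b + X ^ a (1 - X) ^ (b + 1)`.
-/

open Matrix

/-- The difference operator: `(Δ s)_n = s_{n+1} − s_n`. -/
def deltaOp (s : ℕ → ℝ) : ℕ → ℝ := fun n => s (n + 1) - s n

/-- The Hankel matrix `S^N_m`: `(S^N_m)_{ij} = s_{2N+m-i-j}` (1-based). -/
def hankelS (N m : ℕ) (s : ℕ → ℝ) : Matrix (Fin N) (Fin N) ℝ :=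
  Matrix.of fun i j => s (2 * N + m - (i : ℕ) - (j : ℕ) - 2)

open Polynomial Finset

noncomputable def momentFunctional (s : ℕ → ℝ) : ℝ[X] →ₗ[ℝ] ℝ :=
  lsum fun n => s n • LinearMap.id

-- Reversing the indices turns the entry `s (2N + m - i - j - 2)` into `s (m + i + j)`.
theorem dotProduct_hankelS_mulVec_comp_rev {N : ℕ} (m : ℕ) (s : ℕ → ℝ) (v : Fin N → ℝ) :
    (v ∘ Fin.rev) ⬝ᵥ (hankelS N m s *ᵥ (v ∘ Fin.rev)) =
      ∑ i : Fin N, ∑ j : Fin N, v i * v j * s (m + i + j) := by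
  simp only [dotProduct, mulVec, hankelS, of_apply, Function.comp_apply, mul_sum]
  rw [← Equiv.sum_comp Fin.revPerm]
  refine sum_congr rfl fun i _ => ?_
  rw [← Equiv.sum_comp Fin.revPerm]
  refine sum_congr rfl fun j _ => ?_
  simp only [Fin.revPerm_apply, Fin.rev_rev, Fin.val_rev]
  have := i.isLt; have := j.isLt
  rw [show 2 * N + m - (N - (i + 1)) - (N - (j + 1)) - 2 = m + i + j by omega]
  ring

namespace momentFunctional

variable {N : ℕ} {s : ℕ → ℝ} {q : ℝ[X]}

theorem C_mul_X_pow (c : ℝ) (n : ℕ) : momentFunctional s (C c * X ^ n) = c * s n := by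
  rw [C_mul_X_pow_eq_monomial, momentFunctional, lsum_apply, sum_monomial_index] <;>
    simp [mul_comm]

theorem X_pow_mul_one_sub_X_pow (k n : ℕ) :
    momentFunctional s (X ^ n * (1 - X) ^ k) = (-1) ^ k * deltaOp^[k] s n := by
  induction k generalizing n with
  | zero => simpa using C_mul_X_pow (s := s) 1 n
  | succ k ih =>
    have hsplit : (X ^ n * (1 - X) ^ (k + 1) : ℝ[X]) =
        X ^ n * (1 - X) ^ k - X ^ (n + 1) * (1 - X) ^ k := by ring
    rw [hsplit, map_sub, ih, ih, Function.iterate_succ_apply', deltaOp]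
    ring

theorem X_pow_mul_sq (m : ℕ) (hq : q.natDegree < N) :
    momentFunctional s (X ^ m * q ^ 2) =
      ∑ i : Fin N, ∑ j : Fin N, q.coeff i * q.coeff j * s (m + i + j) := by
  conv_lhs => rw [q.as_sum_range_C_mul_X_pow' hq, ← Fin.sum_univ_eq_sum_range, sq, sum_mul_sum,
    mul_sum, map_sum]
  refine sum_congr rfl fun i _ => ?_
  rw [mul_sum, map_sum]
  refine sum_congr rfl fun j _ => ?_
  rw [← C_mul_X_pow (s := s), C_mul]
  ring_nf

theorem X_mul_sq_nonneg (h1 : (hankelS N 1 s).PosSemidef) (hq : q.natDegree < N) :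
    0 ≤ momentFunctional s (X * q ^ 2) := by
  have := h1.dotProduct_mulVec_nonneg ((fun i : Fin N => q.coeff i) ∘ Fin.rev)
  rwa [star_trivial, dotProduct_hankelS_mulVec_comp_rev, ← X_pow_mul_sq 1 hq, pow_one] at this

theorem one_sub_X_mul_sq_nonneg (h0 : (hankelS N 0 s - hankelS N 1 s).PosSemidef)
    (hq : q.natDegree < N) : 0 ≤ momentFunctional s ((1 - X) * q ^ 2) := by
  have := h0.dotProduct_mulVec_nonneg ((fun i : Fin N => q.coeff i) ∘ Fin.rev)
  rwa [star_trivial, sub_mulVec, dotProduct_sub, dotProduct_hankelS_mulVec_comp_rev,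
    dotProduct_hankelS_mulVec_comp_rev, ← X_pow_mul_sq 0 hq, ← X_pow_mul_sq 1 hq, ← map_sub,
    pow_zero, pow_one, ← sub_mul] at this

theorem X_pow_mul_one_sub_X_pow_nonneg_of_add_eq
    (h0 : (hankelS N 0 s - hankelS N 1 s).PosSemidef) (h1 : (hankelS N 1 s).PosSemidef)
    {a b : ℕ} (hab : a + b + 1 = 2 * N) : 0 ≤ momentFunctional s (X ^ a * (1 - X) ^ b) := by
  have hdeg (c d : ℕ) (hcd : c + d < N) : (X ^ c * (1 - X) ^ d : ℝ[X]).natDegree < N :=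
    lt_of_le_of_lt (by compute_degree) hcd
  obtain ⟨c, rfl | rfl⟩ := Nat.even_or_odd' a
  · obtain ⟨d, rfl⟩ : ∃ d, b = 2 * d + 1 := ⟨b / 2, by omega⟩
    rw [show (X ^ (2 * c) * (1 - X) ^ (2 * d + 1) : ℝ[X]) = (1 - X) * (X ^ c * (1 - X) ^ d) ^ 2
      by ring]
    exact one_sub_X_mul_sq_nonneg h0 (hdeg c d (by omega))
  · obtain ⟨d, rfl⟩ : ∃ d, b = 2 * d := ⟨b / 2, by omega⟩
    rw [show (X ^ (2 * c + 1) * (1 - X) ^ (2 * d) : ℝ[X]) = X * (X ^ c * (1 - X) ^ d) ^ 2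
      by ring]
    exact X_mul_sq_nonneg h1 (hdeg c d (by omega))

theorem X_pow_mul_one_sub_X_pow_nonneg
    (h0 : (hankelS N 0 s - hankelS N 1 s).PosSemidef) (h1 : (hankelS N 1 s).PosSemidef)
    {a b : ℕ} (hab : a + b < 2 * N) : 0 ≤ momentFunctional s (X ^ a * (1 - X) ^ b) := by
  obtain ⟨d, hd⟩ : ∃ d, a + b + 1 + d = 2 * N := ⟨2 * N - (a + b + 1), by omega⟩
  induction d generalizing a b with
  | zero => exact X_pow_mul_one_sub_X_pow_nonneg_of_add_eq h0 h1 hd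
  | succ d ih =>
    have hsplit : (X ^ a * (1 - X) ^ b : ℝ[X]) =
        X ^ (a + 1) * (1 - X) ^ b + X ^ a * (1 - X) ^ (b + 1) := by ring
    rw [hsplit, map_add]
    exact add_nonneg (ih (by omega) (by omega)) (ih (by omega) (by omega))

end momentFunctional

/-- if `S^N_0 − S^N_1 ≥ 0` and `S^N_1 > 0`, then the sequence is completely
monotonic up to order `2N−1`: `(−1)^k (Δ^k s)_n ≥ 0` for `k + n ≤ 2N−1`. -/
theorem hankel_positivity_implies_complete_monotonicity
    (N : ℕ) (hN : 1 ≤ N) (s : ℕ → ℝ)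
    (h0 : (hankelS N 0 s - hankelS N 1 s).PosSemidef)
    (h1 : (hankelS N 1 s).PosDef) :
    ∀ k n : ℕ, k + n ≤ 2 * N - 1 → 0 ≤ (-1 : ℝ) ^ k * (deltaOp^[k] s n) := by
  intro k n hkn
  rw [← momentFunctional.X_pow_mul_one_sub_X_pow]
  exact momentFunctional.X_pow_mul_one_sub_X_pow_nonneg h0 h1.posSemidef (by omega)
end

section
/- There exist real numbers s_0, s_1, s_2, s_3 such that (−1)^k (Δ^k s)_n ≥ 0 for all integers k, n ≥ 0 with k + n ≤ 3, and yet s_0 s_2 − s_1² < 0, so the 2×2 Hankel matrix with rows (s_2, s_1) and (s_1, s_0) is not positive semidefinite; hence complete monotonicity up to order 2N−1 does not imply the positivity conditions S^N_0 ≥ S^N_1 > 0 (here with N = 2). -/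
/-!
The sequence `7, 3, 1, 1` has differences `-4, -2, 0`, second differences `2, 2` and third
difference `0`, so it is completely monotone up to order 3; but `7 * 1 < 3 ^ 2`, so the Hankel
matrix `!![s 2, s 1; s 1, s 0]` has negative determinant and cannot be positive semidefinite.
-/

open Matrix

theorem det_hankelS_two_zero (s : ℕ → ℝ) : (hankelS 2 0 s).det = s 0 * s 2 - s 1 ^ 2 := by
  simp [det_fin_two, hankelS]
  ring

theorem not_posSemidef_hankelS_two_zero {s : ℕ → ℝ} (h : s 0 * s 2 - s 1 ^ 2 < 0) :
    ¬ (hankelS 2 0 s).PosSemidef := fun hs =>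
  h.not_ge (det_hankelS_two_zero s ▸ hs.det_nonneg)

def cmWitness : ℕ → ℝ
  | 0 => 7
  | 1 => 3
  | _ => 1

theorem cmWitness_alternating_differences_nonneg {k n : ℕ} (h : k + n ≤ 3) :
    0 ≤ (-1 : ℝ) ^ k * deltaOp^[k] cmWitness n := by
  have hk : k ≤ 3 := by omega
  have hn : n ≤ 3 - k := by omega
  interval_cases k <;> interval_cases n <;>
    norm_num [deltaOp, Function.iterate_succ_apply', cmWitness]

theorem cmWitness_hankel_det_neg : cmWitness 0 * cmWitness 2 - cmWitness 1 ^ 2 < 0 := by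
  norm_num [cmWitness]

/-- complete monotonicity up to order `2N−1` (here `N = 2`) does not imply
the Hankel positivity conditions: there are `s_0,…,s_3` with `(−1)^k (Δ^k s)_n ≥ 0` for
`k + n ≤ 3` but `s_0 s_2 − s_1² < 0`, so `S^2_0` is not positive semidefinite. -/
theorem complete_monotonicity_does_not_imply_hankel_positivity :
    ∃ s : ℕ → ℝ,
      (∀ k n : ℕ, k + n ≤ 3 → 0 ≤ (-1 : ℝ) ^ k * (deltaOp^[k] s n)) ∧
      s 0 * s 2 - (s 1) ^ 2 < 0 ∧
      ¬ (hankelS 2 0 s).PosSemidef :=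
  ⟨cmWitness, fun _ _ => cmWitness_alternating_differences_nonneg, cmWitness_hankel_det_neg,
    not_posSemidef_hankelS_two_zero cmWitness_hankel_det_neg⟩
end
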